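/- arXiv:2605.30694 — 3 statements merged into one kernel-verified Lean document; each statement's English description precedes it below -/
import Mathlib

section
/- Let S and A be finite nonempty types, let P : S → A → S → ℝ satisfy P s a s' ≥ 0 and ∑_{s'} P s a s' = 1 for all s, a, let r : S → A → S → ℝ be a reward function, and let γ ∈ ℝ with 0 ≤ γ < 1. Define the Bellman operator T on functions V : S → ℝ by (T V)(s) = max over a ∈ A of ∑_{s'} P s a s' · (r s a s' + γ · V s'). Then T is γ-Lipschitz in the supremum norm: for all V, W : S → ℝ, max_{s} |(T V)(s) − (T W)(s)| ≤ γ · max_{s} |V(s) − W(s)|. -/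
open Finset

theorem aux_sup'_abs_sub {A : Type*} [Fintype A] [Nonempty A]
    (f g : A → ℝ) (c : ℝ) (h : ∀ a, |f a - g a| ≤ c) :
    |univ.sup' univ_nonempty f - univ.sup' univ_nonempty g| ≤ c := by
  rw [abs_sub_le_iff]
  constructor <;>
  · apply sub_le_iff_le_add.mpr
    apply Finset.sup'_le
    intro a _
    have h1 := (abs_sub_le_iff.mp (h a)).1
    have h2 := (abs_sub_le_iff.mp (h a)).2
    have hg := Finset.le_sup' g (Finset.mem_univ a)
    have hf := Finset.le_sup' f (Finset.mem_univ a)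
    linarith

/-- **The Bellman operator is a `γ`-contraction in the supremum norm.** For a finite
discounted MDP with transition kernel `P` (nonnegative, summing to one), rewards `r`, and
discount `0 ≤ γ < 1`, the Bellman operator
`(T V)(s) = max_a ∑_{s'} P s a s' * (r s a s' + γ V s')` satisfies
`max_s |(T V)(s) − (T W)(s)| ≤ γ * max_s |V s − W s|` for all `V W : S → ℝ`. -/
theorem bellman_operator_contraction {S A : Type*} [Fintype S] [Nonempty S]
    [Fintype A] [Nonempty A]
    (P : S → A → S → ℝ) (hP0 : ∀ s a s', 0 ≤ P s a s')
    (hP1 : ∀ s a, ∑ s', P s a s' = 1)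
    (r : S → A → S → ℝ) (γ : ℝ) (hγ0 : 0 ≤ γ) (hγ1 : γ < 1)
    (T : (S → ℝ) → (S → ℝ))
    (hT : ∀ V s, T V s =
      univ.sup' univ_nonempty (fun a => ∑ s', P s a s' * (r s a s' + γ * V s')))
    (V W : S → ℝ) :
    univ.sup' univ_nonempty (fun s => |T V s - T W s|) ≤
      γ * univ.sup' univ_nonempty (fun s => |V s - W s|) := by
  set M := univ.sup' univ_nonempty (fun s => |V s - W s|) with hM
  apply Finset.sup'_le
  intro s _
  rw [hT, hT]
  apply aux_sup'_abs_sub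
  intro a
  have key : (∑ s', P s a s' * (r s a s' + γ * V s')) -
      (∑ s', P s a s' * (r s a s' + γ * W s')) =
      γ * ∑ s', P s a s' * (V s' - W s') := by
    rw [← Finset.sum_sub_distrib, Finset.mul_sum]
    congr 1; ext s'; ring
  rw [key, abs_mul, abs_of_nonneg hγ0]
  apply mul_le_mul_of_nonneg_left _ hγ0
  calc |∑ s', P s a s' * (V s' - W s')| ≤ ∑ s', |P s a s' * (V s' - W s')| :=
        Finset.abs_sum_le_sum_abs _ _
    _ ≤ ∑ s', P s a s' * M := by
        apply Finset.sum_le_sum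
        intro s' _
        rw [abs_mul, abs_of_nonneg (hP0 s a s')]
        exact mul_le_mul_of_nonneg_left
          (Finset.le_sup' (fun s => |V s - W s|) (Finset.mem_univ s')) (hP0 s a s')
    _ = M := by rw [← Finset.sum_mul, hP1, one_mul]
end

section
/- Let S and A be finite nonempty types, let P : S → A → S → ℝ satisfy P s a s' ≥ 0 and ∑_{s'} P s a s' = 1 for all s, a, let r : S → A → S → ℝ be a reward function, and let γ ∈ ℝ with 0 ≤ γ < 1. Then there exists a unique function V* : S → ℝ satisfying the Bellman optimality equation V*(s) = max over a ∈ A of ∑_{s'} P s a s' · (r s a s' + γ · V*(s')) for all s ∈ S. -/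
open Finset

/-
The Bellman operator `T` is a `γ`-contraction of `S → ℝ` in the sup distance: each action value
`∑ P(s'|s,a) (r + γ V s')` moves by at most `γ ‖V - W‖∞`, because `P(·|s,a)` averages `V - W`,
and taking the maximum over actions preserves such a uniform bound. Banach's fixed point theorem
on the complete space `S → ℝ` then gives exactly one fixed point.
-/

lemma Finset.sup'_le_add_sup' {ι G : Type*} [AddCommGroup G] [LinearOrder G]
    [IsOrderedAddMonoid G] {s : Finset ι} (hs : s.Nonempty) {f g : ι → G} {b : G}
    (h : ∀ i ∈ s, f i ≤ b + g i) : s.sup' hs f ≤ b + s.sup' hs g := by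
  rw [add_sup']
  exact sup'_mono_fun h

lemma Finset.abs_sup'_sub_sup'_le {ι G : Type*} [AddCommGroup G] [LinearOrder G]
    [IsOrderedAddMonoid G] {s : Finset ι} (hs : s.Nonempty) {f g : ι → G} {b : G}
    (h : ∀ i ∈ s, |f i - g i| ≤ b) : |s.sup' hs f - s.sup' hs g| ≤ b := by
  simp only [abs_sub_le_iff, sub_le_iff_le_add] at h ⊢
  exact ⟨sup'_le_add_sup' hs fun i hi => (h i hi).1, sup'_le_add_sup' hs fun i hi => (h i hi).2⟩

lemma abs_sum_mul_sub_le_dist {S : Type*} [Fintype S] {p : S → ℝ} (hp0 : ∀ s, 0 ≤ p s)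
    (hp1 : ∑ s, p s = 1) (V W : S → ℝ) : |∑ s, p s * (V s - W s)| ≤ dist V W :=
  calc |∑ s, p s * (V s - W s)|
    _ ≤ ∑ s, p s * |V s - W s| := by
        refine (abs_sum_le_sum_abs _ _).trans_eq (sum_congr rfl fun s _ => ?_)
        rw [abs_mul, abs_of_nonneg (hp0 s)]
    _ ≤ ∑ s, p s * dist V W := by
        gcongr with s
        · exact hp0 s
        · exact (Real.dist_eq (V s) (W s)).symm.trans_le (dist_le_pi_dist V W s)
    _ = dist V W := by rw [← sum_mul, hp1, one_mul]

section Bellman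

variable {S A : Type*} [Fintype S] [Fintype A] [Nonempty A]

def actionValue (P r : S → A → S → ℝ) (γ : ℝ) (V : S → ℝ) (s : S) (a : A) : ℝ :=
  ∑ s', P s a s' * (r s a s' + γ * V s')

def bellmanOperator (P r : S → A → S → ℝ) (γ : ℝ) (V : S → ℝ) (s : S) : ℝ :=
  univ.sup' univ_nonempty (actionValue P r γ V s)

variable {P : S → A → S → ℝ} (r : S → A → S → ℝ) {γ : ℝ}

omit [Fintype A] [Nonempty A] in
lemma actionValue_sub_actionValue (V W : S → ℝ) (s : S) (a : A) :
    actionValue P r γ V s a - actionValue P r γ W s a =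
      γ * ∑ s', P s a s' * (V s' - W s') := by
  rw [actionValue, actionValue, ← sum_sub_distrib, mul_sum]
  exact sum_congr rfl fun _ _ => by ring

lemma dist_bellmanOperator_le (hP0 : ∀ s a s', 0 ≤ P s a s') (hP1 : ∀ s a, ∑ s', P s a s' = 1)
    (hγ0 : 0 ≤ γ) (V W : S → ℝ) :
    dist (bellmanOperator P r γ V) (bellmanOperator P r γ W) ≤ γ * dist V W := by
  refine (dist_pi_le_iff (by positivity)).mpr fun s => ?_
  rw [Real.dist_eq]
  refine abs_sup'_sub_sup'_le _ fun a _ => ?_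
  rw [actionValue_sub_actionValue, abs_mul, abs_of_nonneg hγ0]
  exact mul_le_mul_of_nonneg_left (abs_sum_mul_sub_le_dist (hP0 s a) (hP1 s a) V W) hγ0

lemma contractingWith_bellmanOperator (hP0 : ∀ s a s', 0 ≤ P s a s')
    (hP1 : ∀ s a, ∑ s', P s a s' = 1) (hγ0 : 0 ≤ γ) (hγ1 : γ < 1) :
    ContractingWith γ.toNNReal (bellmanOperator P r γ) :=
  ⟨Real.toNNReal_lt_one.mpr hγ1, LipschitzWith.of_dist_le_mul fun V W => by
    rw [Real.coe_toNNReal γ hγ0]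
    exact dist_bellmanOperator_le r hP0 hP1 hγ0 V W⟩

end Bellman

theorem bellman_fixed_point_exists_unique_general {S A : Type*} [Fintype S]
    [Fintype A] [Nonempty A]
    (P : S → A → S → ℝ) (hP0 : ∀ s a s', 0 ≤ P s a s')
    (hP1 : ∀ s a, ∑ s', P s a s' = 1)
    (r : S → A → S → ℝ) (γ : ℝ) (hγ0 : 0 ≤ γ) (hγ1 : γ < 1) :
    ∃! Vstar : S → ℝ, ∀ s, Vstar s =
      univ.sup' univ_nonempty (fun a => ∑ s', P s a s' * (r s a s' + γ * Vstar s')) := by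
  have hT := contractingWith_bellmanOperator r hP0 hP1 hγ0 hγ1
  refine ⟨ContractingWith.fixedPoint _ hT, fun s => ?_, fun V hV => ?_⟩
  · exact (congrFun hT.fixedPoint_isFixedPt s).symm
  · exact hT.fixedPoint_unique (funext fun s => (hV s).symm)

/-- **Existence and uniqueness of the optimal value function.** For a finite discounted
MDP with transition kernel `P` (nonnegative, summing to one), rewards `r`, and discount
`0 ≤ γ < 1`, there exists a unique `V* : S → ℝ` satisfying the Bellman optimality
equation `V*(s) = max_a ∑_{s'} P s a s' * (r s a s' + γ V*(s'))` for all `s`. -/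
theorem bellman_fixed_point_exists_unique {S A : Type*} [Fintype S] [Nonempty S]
    [Fintype A] [Nonempty A]
    (P : S → A → S → ℝ) (hP0 : ∀ s a s', 0 ≤ P s a s')
    (hP1 : ∀ s a, ∑ s', P s a s' = 1)
    (r : S → A → S → ℝ) (γ : ℝ) (hγ0 : 0 ≤ γ) (hγ1 : γ < 1) :
    ∃! Vstar : S → ℝ, ∀ s, Vstar s =
      univ.sup' univ_nonempty (fun a => ∑ s', P s a s' * (r s a s' + γ * Vstar s')) :=
  bellman_fixed_point_exists_unique_general P hP0 hP1 r γ hγ0 hγ1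
end

section
/- (Bisimulation preserves optimal values.) Let S and A be finite nonempty types, let P : S → A → S → ℝ satisfy P s a s' ≥ 0 and ∑_{s'} P s a s' = 1 for all s, a, let r : S → A → ℝ, let γ ∈ [0,1), and let V* : S → ℝ be the unique solution of the Bellman equation V*(s) = max_a (r s a + γ ∑_{s'} P s a s' · V*(s')). Suppose ≈ is an equivalence relation (setoid) on S such that whenever s ≈ t: (i) r s a = r t a for every action a, and (ii) for every action a and every equivalence class c of ≈, ∑_{s' ∈ c} P s a s' = ∑_{s' ∈ c} P t a s'. Then s ≈ t implies V*(s) = V*(t). -/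
open Finset Classical in
/-- If `f` is constant on equivalence classes of `E`, then for bisimilar states `s, t`
the expectations of `f` under `P s a` and `P t a` agree. -/
theorem bisim_sum_eq_of_classConstant {S A : Type*} [Fintype S]
    (P : S → A → S → ℝ) (E : Setoid S)
    (hP : ∀ s t, E.r s t → ∀ (a : A) (u : S),
      (∑ s', if E.r s' u then P s a s' else 0) =
        ∑ s', if E.r s' u then P t a s' else 0)
    (s t : S) (hst : E.r s t) (a : A) (f : S → ℝ)
    (hf : ∀ u v, E.r u v → f u = f v) :
    ∑ s', P s a s' * f s' = ∑ s', P t a s' * f s' := by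
  classical
  have key : ∀ w : S, ∑ s', P w a s' * f s' =
      ∑ q : Quotient E, (f q.out) * (∑ s', if E.r s' q.out then P w a s' else 0) := by
    intro w
    rw [← Finset.sum_fiberwise (univ : Finset S) (fun s' => (⟦s'⟧ : Quotient E))
      (fun s' => P w a s' * f s')]
    refine Finset.sum_congr rfl fun q _ => ?_
    have hmem : ∀ s' : S, ((⟦s'⟧ : Quotient E) = q) ↔ E.r s' q.out := by
      intro s'
      constructor
      · intro h
        exact Quotient.exact (h.trans q.out_eq.symm)
      · intro h
        exact (Quotient.sound h).trans q.out_eq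
    rw [Finset.sum_filter]
    rw [Finset.mul_sum]
    refine Finset.sum_congr rfl fun s' _ => ?_
    by_cases h : E.r s' q.out
    · simp only [h, (hmem s').mpr h, if_pos, if_true]
      rw [hf s' q.out h]
      ring
    · simp only [h, fun hh => h ((hmem s').mp hh), if_neg, if_false, mul_zero]
      split <;> simp_all
  rw [key s, key t]
  refine Finset.sum_congr rfl fun q _ => ?_
  rw [hP s t hst a q.out]

open Finset Classical in

/-- **Bisimulation preserves optimal values.** Let `V*` be the unique solution of the
Bellman equation `V*(s) = max_a (r s a + γ ∑_{s'} P s a s' * V*(s'))` for a finite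
discounted MDP, and let `≈` be an equivalence relation (setoid) on states such that
related states have equal rewards for every action and equal total transition
probability into every equivalence class (indexed by a representative `u`) for every
action. Then related states have equal optimal values. -/
theorem bisimulation_preserves_optimal_values {S A : Type*} [Fintype S] [Nonempty S]
    [Fintype A] [Nonempty A]
    (P : S → A → S → ℝ) (hP0 : ∀ s a s', 0 ≤ P s a s')
    (hP1 : ∀ s a, ∑ s', P s a s' = 1)
    (r : S → A → ℝ) (γ : ℝ) (hγ0 : 0 ≤ γ) (hγ1 : γ < 1)
    (Vstar : S → ℝ)
    (hV : ∀ s, Vstar s =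
      univ.sup' univ_nonempty (fun a => r s a + γ * ∑ s', P s a s' * Vstar s'))
    (E : Setoid S)
    (hr : ∀ s t, E.r s t → ∀ a, r s a = r t a)
    (hP : ∀ s t, E.r s t → ∀ (a : A) (u : S),
      (∑ s', if E.r s' u then P s a s' else 0) =
        ∑ s', if E.r s' u then P t a s' else 0)
    (s t : S) (hst : E.r s t) : Vstar s = Vstar t := by
  classical
  -- D : max gap between related states
  set g : S × S → ℝ := fun p => if E.r p.1 p.2 then Vstar p.1 - Vstar p.2 else 0 with hg
  set D : ℝ := (univ : Finset (S × S)).sup' ⟨(s, t), mem_univ _⟩ g with hDdef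
  have hD0 : 0 ≤ D := by
    have h := Finset.le_sup' g (Finset.mem_univ (s, s))
    have hgs : g (s, s) = 0 := by simp [hg, E.refl s]
    rw [hgs] at h
    exact h
  have hDle : ∀ x y, E.r x y → Vstar x - Vstar y ≤ D := by
    intro x y hxy
    have h := Finset.le_sup' g (Finset.mem_univ (x, y))
    have hgx : g (x, y) = Vstar x - Vstar y := by simp [hg, hxy]
    rw [hgx] at h
    exact h
  -- the class-wise max of Vstar
  have hWne : ∀ u : S, ((univ : Finset S).filter (fun v => E.r v u)).Nonempty :=
    fun u => ⟨u, by simp only [Finset.mem_filter, Finset.mem_univ, true_and]; exact E.refl u⟩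
  set W : S → ℝ := fun u => ((univ : Finset S).filter (fun v => E.r v u)).sup' (hWne u) Vstar
    with hWdef
  have hWconst : ∀ u v, E.r u v → W u = W v := by
    intro u v huv
    have hset : (univ : Finset S).filter (fun w => E.r w u) =
        (univ : Finset S).filter (fun w => E.r w v) := by
      refine Finset.filter_congr fun w _ => ?_
      constructor
      · exact fun h => E.trans h huv
      · exact fun h => E.trans h (E.symm huv)
    show ((univ : Finset S).filter (fun w => E.r w u)).sup' (hWne u) Vstar =
        ((univ : Finset S).filter (fun w => E.r w v)).sup' (hWne v) Vstar
    exact Finset.sup'_congr _ hset (fun _ _ => rfl)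
  have hWle : ∀ u, Vstar u ≤ W u :=
    fun u => Finset.le_sup' Vstar
      (by simp only [Finset.mem_filter, Finset.mem_univ, true_and]; exact E.refl u)
  have hWgap : ∀ u, W u - Vstar u ≤ D := by
    intro u
    obtain ⟨v, hv, hvW⟩ := Finset.exists_mem_eq_sup' (hWne u) Vstar
    have hvu : E.r v u := (Finset.mem_filter.mp hv).2
    have hWu : W u = Vstar v := hvW
    rw [hWu]
    exact hDle v u hvu
  -- key step: related gap bounded by γ * D
  have key : ∀ x y, E.r x y → Vstar x - Vstar y ≤ γ * D := by
    intro x y hxy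
    obtain ⟨a, _, ha⟩ := Finset.exists_mem_eq_sup' (univ_nonempty (α := A))
      (fun a => r x a + γ * ∑ s', P x a s' * Vstar s')
    have hx : Vstar x = r x a + γ * ∑ s', P x a s' * Vstar s' := (hV x).trans ha
    have hy : r y a + γ * ∑ s', P y a s' * Vstar s' ≤ Vstar y := by
      rw [hV y]
      exact Finset.le_sup' (fun a => r y a + γ * ∑ s', P y a s' * Vstar s')
        (Finset.mem_univ a)
    have h1 : ∑ s', P x a s' * Vstar s' ≤ ∑ s', P x a s' * W s' :=
      Finset.sum_le_sum fun s' _ => mul_le_mul_of_nonneg_left (hWle s') (hP0 x a s')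
    have h2 : ∑ s', P x a s' * W s' = ∑ s', P y a s' * W s' :=
      bisim_sum_eq_of_classConstant P E hP x y hxy a W hWconst
    have h3 : ∑ s', P y a s' * W s' - ∑ s', P y a s' * Vstar s' ≤ D := by
      rw [← Finset.sum_sub_distrib]
      calc ∑ s', (P y a s' * W s' - P y a s' * Vstar s')
          ≤ ∑ s', P y a s' * D := by
            refine Finset.sum_le_sum fun s' _ => ?_
            rw [← mul_sub]
            exact mul_le_mul_of_nonneg_left (hWgap s') (hP0 y a s')
        _ = D := by rw [← Finset.sum_mul, hP1 y a, one_mul]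
    have hrxy := hr x y hxy a
    have : Vstar x - Vstar y ≤ γ * (∑ s', P x a s' * Vstar s' - ∑ s', P y a s' * Vstar s') := by
      rw [hx]
      nlinarith [hy]
    calc Vstar x - Vstar y
        ≤ γ * (∑ s', P x a s' * Vstar s' - ∑ s', P y a s' * Vstar s') := this
      _ ≤ γ * D := by
          refine mul_le_mul_of_nonneg_left ?_ hγ0
          calc ∑ s', P x a s' * Vstar s' - ∑ s', P y a s' * Vstar s'
              ≤ ∑ s', P y a s' * W s' - ∑ s', P y a s' * Vstar s' := by
                rw [← h2]; linarith [h1]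
            _ ≤ D := h3
  -- D ≤ γ D, hence D ≤ 0
  have hDγ : D ≤ γ * D := by
    rw [hDdef]
    refine Finset.sup'_le _ _ fun p _ => ?_
    by_cases h : E.r p.1 p.2
    · simpa [hg, h] using key p.1 p.2 h
    · simp only [hg, h, if_false]
      positivity
  have hD : D ≤ 0 := by nlinarith
  have h1 := (hDle s t hst).trans hD
  have h2 := (hDle t s (E.symm hst)).trans hD
  linarith
end
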